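/- arXiv:2209.14158 — 4 statements merged into one kernel-verified Lean document; each statement's English description precedes it below -/
import Mathlib

section
/- Let n, ℓ be positive integers and let f be an ℓ-local function with n input blocks and n output blocks (inputs indexed 1,…,n, outputs indexed 1,…,n). Set L := ⌊n/(4ℓ)⌋. Then the number of input indices m with m > n/2 that are L-good satisfies |{m ∈ {1,…,n} : m > n/2 and m is L-good}| ≥ n/4 (equivalently, 4·|{m : m > n/2, m L-good}| ≥ n). -/
/-- Output index `k` is influenced by input index `j` if there exist two inputs that agree
at all coordinates except `j` whose images under `f` differ at coordinate `k`. -/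
def Influences {n : ℕ} {α β : Type*} (f : (Fin n → α) → (Fin n → β)) (j k : Fin n) : Prop :=
  ∃ x y : Fin n → α, (∀ i, i ≠ j → x i = y i) ∧ f x k ≠ f y k

/-- The forward lightcone of input index `j`: the set of output indices it influences. -/
def fwdLight {n : ℕ} {α β : Type*} (f : (Fin n → α) → (Fin n → β)) (j : Fin n) : Set (Fin n) :=
  {k | Influences f j k}

/-- The backward lightcone of output index `k`: the set of input indices influencing it. -/
def backLight {n : ℕ} {α β : Type*} (f : (Fin n → α) → (Fin n → β)) (k : Fin n) : Set (Fin n) :=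
  {j | Influences f j k}

/-! Each of the first `L` outputs is influenced by at most `ℓ` inputs, so at most
`L * ℓ ≤ n / 4` inputs are not `L`-good. The second half of the inputs has at least `n / 2`
elements, hence at least `n / 2 - n / 4 = n / 4` of them are `L`-good. -/

open Finset

namespace Influences

variable {n ℓ : ℕ} {α β : Type*} {f : (Fin n → α) → (Fin n → β)}

theorem card_filter_exists_le (hloc : ∀ k : Fin n, (backLight f k).ncard ≤ ℓ)
    (K : Finset (Fin n)) [DecidablePred fun j => ∃ k ∈ K, Influences f j k] :
    #{j | ∃ k ∈ K, Influences f j k} ≤ #K * ℓ := by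
  classical
  calc #{j | ∃ k ∈ K, Influences f j k}
      ≤ #(K.biUnion fun k => {j | Influences f j k}) :=
        card_le_card fun j hj => by simpa using hj
    _ ≤ #K * ℓ := card_biUnion_le_card_mul _ _ _ fun k _ => by
        simpa [backLight, ← Set.ncard_coe_finset] using hloc k

end Influences

theorem Fin.card_filter_lt_two_mul_val_succ (n : ℕ) :
    #{m : Fin n | n < 2 * ((m : ℕ) + 1)} = n - n / 2 := by
  have hsplit := card_filter_add_card_filter_not (s := (univ : Finset (Fin n)))
    (fun m : Fin n => (m : ℕ) < n / 2)
  have hfirst : #{m : Fin n | (m : ℕ) < n / 2} = n / 2 := by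
    rw [Fin.card_filter_val_lt]; omega
  have hsecond : ({m | ¬ (m : ℕ) < n / 2} : Finset (Fin n)) =
      ({m | n < 2 * ((m : ℕ) + 1)} : Finset (Fin n)) :=
    filter_congr fun m _ => by omega
  rw [card_univ, Fintype.card_fin, hfirst, hsecond] at hsplit
  omega

theorem stmt0_general {α β : Type*} (n ℓ : ℕ)
    (f : (Fin n → α) → (Fin n → β))
    (hloc : ∀ k : Fin n, (backLight f k).ncard ≤ ℓ) :
    n ≤ 4 * {m : Fin n | n < 2 * ((m : ℕ) + 1) ∧
        fwdLight f m ∩ {k : Fin n | (k : ℕ) < n / (4 * ℓ)} = ∅}.ncard := by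
  classical
  set L := n / (4 * ℓ)
  set K : Finset (Fin n) := {k | (k : ℕ) < L}
  set secondHalf : Finset (Fin n) := {m | n < 2 * ((m : ℕ) + 1)}
  set bad : Finset (Fin n) := {j | ∃ k ∈ K, Influences f j k}
  have hgood : {m : Fin n | n < 2 * ((m : ℕ) + 1) ∧ fwdLight f m ∩ {k | (k : ℕ) < L} = ∅} =
      ↑(secondHalf \ bad) := by
    ext m
    simp [secondHalf, bad, K, fwdLight, Set.eq_empty_iff_forall_notMem, imp_not_comm]
  have hbad : #bad ≤ L * ℓ :=
    (Influences.card_filter_exists_le hloc K).trans <| Nat.mul_le_mul_right ℓ <| by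
      simp [K, Fin.card_filter_val_lt]
  have hL : L * ℓ * 4 ≤ n := by
    simpa [mul_assoc, mul_comm ℓ] using Nat.div_mul_le_self n (4 * ℓ)
  have hhalf : #secondHalf = n - n / 2 := Fin.card_filter_lt_two_mul_val_succ n
  rw [hgood, Set.ncard_coe_finset]
  have hsdiff := le_card_sdiff bad secondHalf
  omega

/-- If `f` is an `ℓ`-local function with `n` input and `n` output blocks
and `L := ⌊n / (4ℓ)⌋`, then the number of input indices `m` in the second half
(`m > n/2`, for one-based indices) that are `L`-good (their forward lightcone avoids the
first `L` output indices) is at least `n/4`, i.e. `4·|{m : m > n/2, m L-good}| ≥ n`. -/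
theorem stmt0 {α β : Type*} (n ℓ : ℕ) (hn : 0 < n) (hℓ : 0 < ℓ)
    (f : (Fin n → α) → (Fin n → β))
    (hloc : ∀ k : Fin n, (backLight f k).ncard ≤ ℓ) :
    n ≤ 4 * {m : Fin n | n < 2 * ((m : ℕ) + 1) ∧
        fwdLight f m ∩ {k : Fin n | (k : ℕ) < n / (4 * ℓ)} = ∅}.ncard :=
  stmt0_general n ℓ f hloc
end

section
/- Let n ≥ 5 and ℓ ≥ 1 be integers and let f be an ℓ-local function with n input blocks and n output blocks. Set L := ⌊n/(4ℓ)⌋. Then there exists an input index m ∈ {1,…,n} with m > n/2 such that m is L-good (i.e., L→(m) ∩ {1,…,L} = ∅) and m has limited signaling (i.e., |L→(m)| ≤ 8ℓ). -/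
open Finset

theorem card_filter_lt_mul_le_sum {ι : Type*} (s : Finset ι) (g : ι → ℕ) (t : ℕ) :
    #{i ∈ s | t < g i} * (t + 1) ≤ ∑ i ∈ s, g i :=
  calc #{i ∈ s | t < g i} * (t + 1) ≤ ∑ i ∈ s with t < g i, g i := by
        rw [← smul_eq_mul]; exact card_nsmul_le_sum _ _ _ fun i hi => (mem_filter.1 hi).2
    _ ≤ ∑ i ∈ s, g i := sum_le_sum_of_subset (filter_subset _ _)

theorem le_two_mul_card_filter_lt_two_mul_val_succ (n : ℕ) :
    n ≤ 2 * #{m : Fin n | n < 2 * ((m : ℕ) + 1)} := by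
  have hlow : #{m : Fin n | ¬ n < 2 * ((m : ℕ) + 1)} = min n (n / 2) := by
    rw [← Fin.card_filter_val_lt]
    congr 1; ext m; simp only [mem_filter, mem_univ, true_and]; omega
  have := card_filter_add_card_filter_not (s := (univ : Finset (Fin n)))
    (fun m : Fin n => n < 2 * ((m : ℕ) + 1))
  rw [hlow, card_univ, Fintype.card_fin] at this
  omega

section Lightcones

open scoped Classical

variable {n ℓ : ℕ} {α β : Type*} (f : (Fin n → α) → (Fin n → β))

theorem ncard_fwdLight (j : Fin n) : (fwdLight f j).ncard = #{k | Influences f j k} := by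
  rw [← Set.ncard_coe_finset, coe_filter_univ]; rfl

theorem ncard_backLight (k : Fin n) : (backLight f k).ncard = #{j | Influences f j k} := by
  rw [← Set.ncard_coe_finset, coe_filter_univ]; rfl

theorem sum_ncard_fwdLight_eq_sum_ncard_backLight :
    ∑ j, (fwdLight f j).ncard = ∑ k, (backLight f k).ncard := by
  simp only [ncard_fwdLight, ncard_backLight]
  exact sum_card_bipartiteAbove_eq_sum_card_bipartiteBelow (fun j k => Influences f j k)

variable {f}

theorem sum_ncard_fwdLight_le (hloc : ∀ k, (backLight f k).ncard ≤ ℓ) :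
    ∑ j, (fwdLight f j).ncard ≤ n * ℓ :=
  calc ∑ j, (fwdLight f j).ncard = ∑ k, (backLight f k).ncard :=
        sum_ncard_fwdLight_eq_sum_ncard_backLight f
    _ ≤ ∑ _k : Fin n, ℓ := sum_le_sum fun k _ => hloc k
    _ = n * ℓ := by simp

theorem eight_mul_card_filter_ncard_fwdLight_gt_le (hloc : ∀ k, (backLight f k).ncard ≤ ℓ) :
    8 * #{j | 8 * ℓ < (fwdLight f j).ncard} ≤ n := by
  have h := (card_filter_lt_mul_le_sum univ (fun j => (fwdLight f j).ncard) (8 * ℓ)).trans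
    (sum_ncard_fwdLight_le hloc)
  nlinarith

theorem card_filter_exists_influences_le (hloc : ∀ k, (backLight f k).ncard ≤ ℓ)
    (s : Finset (Fin n)) : #{j | ∃ k ∈ s, Influences f j k} ≤ #s * ℓ :=
  calc #{j | ∃ k ∈ s, Influences f j k} ≤ #(s.biUnion fun k => {j | Influences f j k}) :=
        card_le_card fun j hj => by simpa using hj
    _ ≤ ∑ k ∈ s, #{j | Influences f j k} := card_biUnion_le
    _ ≤ #s * ℓ := by
        rw [← smul_eq_mul]
        exact sum_le_card_nsmul _ _ _ fun k _ => ncard_backLight f k ▸ hloc k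

theorem four_mul_card_filter_influences_val_lt_div_le (hloc : ∀ k, (backLight f k).ncard ≤ ℓ) :
    4 * #{j | ∃ k : Fin n, (k : ℕ) < n / (4 * ℓ) ∧ Influences f j k} ≤ n := by
  have h := card_filter_exists_influences_le hloc {k : Fin n | (k : ℕ) < n / (4 * ℓ)}
  simp only [Fin.card_filter_val_lt, mem_filter, mem_univ, true_and] at h
  have hL : n / (4 * ℓ) * (4 * ℓ) ≤ n := Nat.div_mul_le_self n (4 * ℓ)
  nlinarith [min_le_right n (n / (4 * ℓ))]

end Lightcones

theorem stmt2_general {α β : Type*} (n ℓ : ℕ) (hn : 5 ≤ n)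
    (f : (Fin n → α) → (Fin n → β))
    (hloc : ∀ k : Fin n, (backLight f k).ncard ≤ ℓ) :
    ∃ m : Fin n, n < 2 * ((m : ℕ) + 1) ∧
      fwdLight f m ∩ {k : Fin n | (k : ℕ) < n / (4 * ℓ)} = ∅ ∧
      (fwdLight f m).ncard ≤ 8 * ℓ := by
  classical
  set loud : Finset (Fin n) := {j | 8 * ℓ < (fwdLight f j).ncard}
  set early : Finset (Fin n) := {j | ∃ k : Fin n, (k : ℕ) < n / (4 * ℓ) ∧ Influences f j k}
  set late : Finset (Fin n) := {m | n < 2 * ((m : ℕ) + 1)}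
  have hloud : 8 * #loud ≤ n := eight_mul_card_filter_ncard_fwdLight_gt_le hloc
  have hearly : 4 * #early ≤ n := four_mul_card_filter_influences_val_lt_div_le hloc
  have hlate : n ≤ 2 * #late := le_two_mul_card_filter_lt_two_mul_val_succ n
  obtain ⟨m, hm_late, hm_bad⟩ := exists_mem_notMem_of_card_lt_card (t := late)
    ((card_union_le loud early).trans_lt (by omega))
  rw [mem_union, not_or] at hm_bad
  refine ⟨m, by simpa [late] using hm_late, ?_, by simpa [loud] using hm_bad.1⟩
  refine Set.eq_empty_of_forall_notMem fun k ⟨hmk, hk⟩ => hm_bad.2 ?_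
  simpa [early] using ⟨k, hk, hmk⟩

/-- Let `n ≥ 5`, `ℓ ≥ 1`, and let `f` be an `ℓ`-local function with `n`
input blocks and `n` output blocks. Set `L := ⌊n / (4ℓ)⌋`. Then there is an input index
`m` in the second half (`m > n/2`, one-based) that is `L`-good (its forward lightcone
avoids the first `L` output indices) and has limited signaling (`|L→(m)| ≤ 8ℓ`). -/
theorem stmt2 {α β : Type*} (n ℓ : ℕ) (hn : 5 ≤ n) (hℓ : 1 ≤ ℓ)
    (f : (Fin n → α) → (Fin n → β))
    (hloc : ∀ k : Fin n, (backLight f k).ncard ≤ ℓ) :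
    ∃ m : Fin n, n < 2 * ((m : ℕ) + 1) ∧
      fwdLight f m ∩ {k : Fin n | (k : ℕ) < n / (4 * ℓ)} = ∅ ∧
      (fwdLight f m).ncard ≤ 8 * ℓ :=
  stmt2_general n ℓ hn f hloc
end

section
/- Let L ≤ m < n be natural numbers and let J ⊆ {L, L+1, …, n−1}. Then there exist functions f : (J → 𝒫) → M₂(ℂ) → 𝒫 and g : ({0,…,n−1}∖J → 𝒫) → (Fin L → M₂(ℂ)) → 𝒫 such that for all Pauli operators P₀,…,P_{n−1} ∈ 𝒫 and all Clifford unitaries C₁,…,C_L, D: |tr( (P_{n−1}⋯P_m) · D · (P_{m−1}⋯P_L) · (P_{L−1}C_L)(P_{L−2}C_{L−1})⋯(P₀C₁) )| = |tr( P · D · Q · C_L⋯C₁ )|, where P = f((P_j)_{j∈J}, D) and Q = g((P_j)_{j∉J}, (C₁,…,C_L)). In particular, P depends only on the Paulis with indices in J and on D, while Q depends only on the Paulis with indices outside J and on C₁,…,C_L. All products are taken with larger-index factors on the left. -/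
/-!
Modulo unit phases, which do not change `|tr|`, Paulis commute, products of Paulis are Paulis,
and a Clifford `U` satisfies `U P = P' U` for a Pauli `P'`. Split both Pauli strings into the
factors indexed by `J` (`a`) and the others (`b`): `P_{n-1}⋯P_m ≐ A_b A_a` and
`P_{m-1}⋯P_L ≐ B_a B_b`. Pushing `P_{L-1}, …, P_0` to the left through the Cliffords gives
`(P_{L-1}C_L)⋯(P₀C₁) = G K` with `G` a phased Pauli and `K = C_L⋯C₁`. Moving `A_b` around the
trace, `tr(A_b A_a D B_a B_b G K) = tr((A_a · D B_a D*) · D · (B_b G · K A_b K*) · K)`, and the two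
bracketed factors are phased Paulis, the first built from the `J`-Paulis and `D` alone, the second
from the other Paulis and the `C_t` alone.
-/

open Matrix

noncomputable section

abbrev M2 := Matrix (Fin 2) (Fin 2) ℂ

def PX : M2 := !![0, 1; 1, 0]
def PY : M2 := !![0, -Complex.I; Complex.I, 0]
def PZ : M2 := !![1, 0; 0, -1]

/-- The Pauli set `𝒫 = {1, X, Y, Z}`. -/
def PauliSet : Set M2 := {1, PX, PY, PZ}

/-- A 2×2 unitary is Clifford if it maps Paulis to Paulis up to a unit phase,
under conjugation. -/
def IsClifford (U : M2) : Prop :=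
  U ∈ Matrix.unitaryGroup (Fin 2) ℂ ∧
  ∀ P ∈ PauliSet, ∃ Q ∈ PauliSet, ∃ α : ℂ, ‖α‖ = 1 ∧ U * P * Uᴴ = α • Q

/-- The descending-index product `f (b-1) · f (b-2) · ⋯ · f a`
(larger-index factors on the left). -/
def dprod {M : Type*} [Monoid M] (f : ℕ → M) (a b : ℕ) : M :=
  ((List.range (b - a)).map fun i => f (b - 1 - i)).prod

theorem PX_mul_self : PX * PX = 1 := by simp [PX, one_fin_two]
theorem PY_mul_self : PY * PY = 1 := by simp [PY, one_fin_two]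
theorem PZ_mul_self : PZ * PZ = 1 := by simp [PZ, one_fin_two]
theorem PX_mul_PY : PX * PY = Complex.I • PZ := by simp [PX, PY, PZ]
theorem PY_mul_PX : PY * PX = (-Complex.I) • PZ := by simp [PX, PY, PZ]
theorem PY_mul_PZ : PY * PZ = Complex.I • PX := by simp [PX, PY, PZ]
theorem PZ_mul_PY : PZ * PY = (-Complex.I) • PX := by simp [PX, PY, PZ]
theorem PZ_mul_PX : PZ * PX = Complex.I • PY := by simp [PX, PY, PZ]
theorem PX_mul_PZ : PX * PZ = (-Complex.I) • PY := by simp [PX, PY, PZ]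

theorem isHermitian_of_mem_pauliSet {P : M2} (hP : P ∈ PauliSet) : P.IsHermitian := by
  rcases hP with rfl | rfl | rfl | rfl <;>
    ext i j <;> fin_cases i <;> fin_cases j <;> simp [PX, PY, PZ]

def phaseCon (A : Type*) [Semiring A] [Algebra ℂ A] : Con A where
  r X Y := ∃ z : Circle, X = z • Y
  iseqv :=
    { refl X := ⟨1, (one_smul _ _).symm⟩
      symm := fun ⟨z, h⟩ => ⟨z⁻¹, by rw [h, inv_smul_smul]⟩
      trans := fun ⟨z, h⟩ ⟨w, h'⟩ => ⟨z * w, by rw [h, h', mul_smul]⟩ }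
  mul' := fun ⟨z, h⟩ ⟨w, h'⟩ => ⟨z * w, by rw [h, h', smul_mul_smul_comm]⟩

theorem phaseCon_smul {A : Type*} [Semiring A] [Algebra ℂ A] {α : ℂ} (hα : ‖α‖ = 1) (X : A) :
    phaseCon A (α • X) X :=
  ⟨⟨α, mem_sphere_zero_iff_norm.2 hα⟩, rfl⟩

theorem phaseCon.conjTranspose {ι : Type*} [Fintype ι] [DecidableEq ι] {X Y : Matrix ι ι ℂ}
    (h : phaseCon _ X Y) : phaseCon _ Xᴴ Yᴴ := by
  obtain ⟨z, rfl⟩ := h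
  refine ⟨z⁻¹, ?_⟩
  rw [Circle.smul_def, Circle.smul_def, conjTranspose_smul, Circle.coe_inv_eq_conj]
  rfl

theorem phaseCon.norm_trace_eq {ι : Type*} [Fintype ι] [DecidableEq ι] {X Y : Matrix ι ι ℂ}
    (h : phaseCon _ X Y) : ‖X.trace‖ = ‖Y.trace‖ := by
  obtain ⟨z, rfl⟩ := h
  rw [Circle.smul_def, trace_smul, smul_eq_mul, norm_mul, Circle.norm_coe, one_mul]

theorem List.prod_map_mul_of_commute {M ι : Type*} [Monoid M] {f g : ι → M} (l : List ι)
    (h : ∀ i ∈ l, ∀ j ∈ l, Commute (g i) (f j)) :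
    (l.map fun i => f i * g i).prod = (l.map f).prod * (l.map g).prod := by
  induction l with
  | nil => simp
  | cons a t ih =>
    simp only [List.map_cons, List.prod_cons]
    rw [ih fun i hi j hj => h i (.tail a hi) j (.tail a hj),
      (Commute.list_prod_right _ _ ?_).mul_mul_mul_comm]
    simp only [List.mem_map]
    rintro _ ⟨j, hj, rfl⟩
    exact h a (.head t) j (.tail a hj)

theorem map_dprod {M N : Type*} [Monoid M] [Monoid N] (φ : M →* N) (f : ℕ → M) (a b : ℕ) :
    φ (dprod f a b) = dprod (fun j => φ (f j)) a b := by
  simp only [dprod, map_list_prod, List.map_map, Function.comp_def]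

theorem dprod_mul_of_commute {M : Type*} [Monoid M] {f g : ℕ → M}
    (h : ∀ i j, Commute (g i) (f j)) (a b : ℕ) :
    dprod (fun j => f j * g j) a b = dprod f a b * dprod g a b :=
  List.prod_map_mul_of_commute _ fun _ _ _ _ => h _ _

theorem dprod_congr {M : Type*} [Monoid M] {f g : ℕ → M} {a b : ℕ}
    (h : ∀ j, a ≤ j → j < b → f j = g j) : dprod f a b = dprod g a b := by
  refine congrArg List.prod (List.map_congr_left fun i hi => h _ ?_ ?_) <;>
    rw [List.mem_range] at hi <;> omega

theorem dprod_mem {M : Type*} [Monoid M] {S : Submonoid M} {f : ℕ → M} {a b : ℕ}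
    (h : ∀ j, a ≤ j → j < b → f j ∈ S) : dprod f a b ∈ S := by
  refine list_prod_mem fun x hx => ?_
  obtain ⟨i, hi, rfl⟩ := List.mem_map.mp hx
  rw [List.mem_range] at hi
  exact h _ (by omega) (by omega)

theorem exists_mem_pauliSet_phaseCon_mul {P Q : M2} (hP : P ∈ PauliSet) (hQ : Q ∈ PauliSet) :
    ∃ R ∈ PauliSet, phaseCon M2 (P * Q) R := by
  rcases hP with rfl | rfl | rfl | rfl <;> rcases hQ with rfl | rfl | rfl | rfl <;>
    simp only [one_mul, mul_one, PX_mul_self, PY_mul_self, PZ_mul_self, PX_mul_PY, PY_mul_PX,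
      PY_mul_PZ, PZ_mul_PY, PZ_mul_PX, PX_mul_PZ] <;>
    first
      | exact ⟨_, by simp [PauliSet], phaseCon_smul (by simp) _⟩
      | exact ⟨_, by simp [PauliSet], (phaseCon M2).refl _⟩

-- Unlike the usual Pauli group, all unit phases are allowed, not only `±1, ±i`.
def pauliGroup : Submonoid M2 where
  carrier := {A | ∃ P ∈ PauliSet, phaseCon M2 A P}
  one_mem' := ⟨1, by simp [PauliSet], (phaseCon M2).refl 1⟩
  mul_mem' := by
    rintro A B ⟨P, hP, hAP⟩ ⟨Q, hQ, hBQ⟩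
    obtain ⟨R, hR, hPQR⟩ := exists_mem_pauliSet_phaseCon_mul hP hQ
    exact ⟨R, hR, (phaseCon M2).trans ((phaseCon M2).mul hAP hBQ) hPQR⟩

theorem pauliSet_subset_pauliGroup {P : M2} (hP : P ∈ PauliSet) : P ∈ pauliGroup :=
  ⟨P, hP, (phaseCon M2).refl P⟩

theorem phaseCon_conjTranspose_self {A : M2} (hA : A ∈ pauliGroup) : phaseCon M2 Aᴴ A := by
  obtain ⟨P, hP, hAP⟩ := hA
  have := phaseCon.conjTranspose hAP
  rw [(isHermitian_of_mem_pauliSet hP).eq] at this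
  exact (phaseCon M2).trans this ((phaseCon M2).symm hAP)

-- `A * B ∼ (A * B)ᴴ = Bᴴ * Aᴴ ∼ B * A`, as phased Paulis are Hermitian up to phase.
theorem phaseCon_mul_comm {A B : M2} (hA : A ∈ pauliGroup) (hB : B ∈ pauliGroup) :
    phaseCon M2 (A * B) (B * A) := by
  have hBA := phaseCon_conjTranspose_self (mul_mem hA hB)
  rw [conjTranspose_mul] at hBA
  have := (phaseCon M2).mul (phaseCon_conjTranspose_self hB) (phaseCon_conjTranspose_self hA)
  exact (phaseCon M2).trans ((phaseCon M2).symm hBA) this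

theorem dprod_mul_phaseCon {a b : ℕ → M2} (ha : ∀ j, a j ∈ pauliGroup)
    (hb : ∀ j, b j ∈ pauliGroup) (lo hi : ℕ) :
    phaseCon M2 (dprod (fun j => a j * b j) lo hi) (dprod a lo hi * dprod b lo hi) := by
  have hcomm : ∀ i j, Commute ((phaseCon M2).mk' (b i)) ((phaseCon M2).mk' (a j)) := by
    intro i j
    show (phaseCon M2).mk' _ * _ = _
    rw [← map_mul, ← map_mul]
    exact (Con.eq _).2 (phaseCon_mul_comm (hb i) (ha j))
  refine (Con.eq _).1 ?_
  show (phaseCon M2).mk' _ = (phaseCon M2).mk' _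
  simp only [map_mul, map_dprod]
  exact dprod_mul_of_commute hcomm lo hi

theorem IsClifford.conjTranspose_mul_self {U : M2} (hU : IsClifford U) : Uᴴ * U = 1 :=
  mem_unitaryGroup_iff'.mp hU.1

theorem IsClifford.conjTranspose_mul_cancel_left {U : M2} (hU : IsClifford U) (X : M2) :
    Uᴴ * (U * X) = X := by
  rw [← mul_assoc, hU.conjTranspose_mul_self, one_mul]

theorem IsClifford.conj_mem_pauliGroup {U A : M2} (hU : IsClifford U) (hA : A ∈ pauliGroup) :
    U * A * Uᴴ ∈ pauliGroup := by
  obtain ⟨P, hP, hAP⟩ := hA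
  obtain ⟨Q, hQ, α, hα, hUP⟩ := hU.2 P hP
  have hconj := (phaseCon M2).mul ((phaseCon M2).mul ((phaseCon M2).refl U) hAP)
    ((phaseCon M2).refl Uᴴ)
  rw [hUP] at hconj
  exact ⟨Q, hQ, (phaseCon M2).trans hconj (phaseCon_smul hα Q)⟩

theorem IsClifford.mul {U V : M2} (hU : IsClifford U) (hV : IsClifford V) :
    IsClifford (U * V) := by
  refine ⟨mul_mem hU.1 hV.1, fun P hP => ?_⟩
  obtain ⟨Q, hQ, z, hz⟩ :=
    hU.conj_mem_pauliGroup (hV.conj_mem_pauliGroup (pauliSet_subset_pauliGroup hP))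
  refine ⟨Q, hQ, z, Circle.norm_coe z, ?_⟩
  rw [conjTranspose_mul, ← Circle.smul_def, ← hz]
  simp only [mul_assoc]

def cliffordSubmonoid : Submonoid M2 where
  carrier := {U | IsClifford U}
  one_mem' := ⟨one_mem _, fun P hP => ⟨P, hP, 1, by simp, by simp⟩⟩
  mul_mem' := IsClifford.mul

theorem List.prod_map_mul_mul_conjTranspose_mem_pauliGroup {ι : Type*} {p c : ι → M2}
    (l : List ι) (hp : ∀ i ∈ l, p i ∈ pauliGroup) (hc : ∀ i ∈ l, IsClifford (c i)) :
    (l.map fun i => p i * c i).prod * (l.map c).prodᴴ ∈ pauliGroup := by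
  induction l with
  | nil => simp [one_mem]
  | cons a t ih =>
    have := mul_mem (hp a (.head t)) ((hc a (.head t)).conj_mem_pauliGroup
      (ih (fun i hi => hp i (.tail a hi)) (fun i hi => hc i (.tail a hi))))
    simpa only [List.map_cons, List.prod_cons, conjTranspose_mul, mul_assoc] using this

theorem dprod_mul_mul_conjTranspose_mem_pauliGroup {p c : ℕ → M2} {lo hi : ℕ}
    (hp : ∀ j, lo ≤ j → j < hi → p j ∈ pauliGroup)
    (hc : ∀ j, lo ≤ j → j < hi → IsClifford (c j)) :
    dprod (fun j => p j * c j) lo hi * (dprod c lo hi)ᴴ ∈ pauliGroup := by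
  refine List.prod_map_mul_mul_conjTranspose_mem_pauliGroup (p := fun i => p (hi - 1 - i))
    (c := fun i => c (hi - 1 - i)) _ (fun i h => hp _ ?_ ?_) (fun i h => hc _ ?_ ?_) <;>
    rw [List.mem_range] at h <;> omega

theorem prod_map_range_mul_eq_dprod {M : Type*} [Monoid M] (f g : ℕ → M) (L : ℕ) :
    ((List.range L).map fun i => f (L - 1 - i) * g (L - i)).prod =
      dprod (fun j => f (j - 1) * g j) 1 (L + 1) := by
  simp only [dprod, Nat.add_sub_cancel, Nat.sub_right_comm _ _ 1]

def leftFactor (a : ℕ → M2) (D : M2) (L m n : ℕ) : M2 :=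
  dprod a m n * (D * dprod a L m * Dᴴ)

def rightFactor (b C : ℕ → M2) (L m n : ℕ) : M2 :=
  dprod b L m * (dprod (fun j => b (j - 1) * C j) 1 (L + 1) * (dprod C 1 (L + 1))ᴴ) *
    (dprod C 1 (L + 1) * dprod b m n * (dprod C 1 (L + 1))ᴴ)

theorem isClifford_dprod {C : ℕ → M2} {L : ℕ} (hC : ∀ t, 1 ≤ t → t ≤ L → IsClifford (C t)) :
    IsClifford (dprod C 1 (L + 1)) :=
  dprod_mem (S := cliffordSubmonoid) fun t h1 h2 => hC t h1 (by omega)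

theorem leftFactor_mem_pauliGroup {a : ℕ → M2} {D : M2} (ha : ∀ j, a j ∈ pauliGroup)
    (hD : IsClifford D) (L m n : ℕ) : leftFactor a D L m n ∈ pauliGroup :=
  mul_mem (dprod_mem fun j _ _ => ha j) (hD.conj_mem_pauliGroup (dprod_mem fun j _ _ => ha j))

theorem rightFactor_mem_pauliGroup {b C : ℕ → M2} {L : ℕ} (hb : ∀ j, b j ∈ pauliGroup)
    (hC : ∀ t, 1 ≤ t → t ≤ L → IsClifford (C t)) (m n : ℕ) :
    rightFactor b C L m n ∈ pauliGroup :=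
  mul_mem (mul_mem (dprod_mem fun j _ _ => hb j)
      (dprod_mul_mul_conjTranspose_mem_pauliGroup (fun j _ _ => hb _)
        fun t h1 h2 => hC t h1 (by omega)))
    ((isClifford_dprod hC).conj_mem_pauliGroup (dprod_mem fun j _ _ => hb j))

theorem rightFactor_congr {b C C' : ℕ → M2} {L : ℕ} (h : ∀ t, 1 ≤ t → t ≤ L → C t = C' t)
    (m n : ℕ) : rightFactor b C L m n = rightFactor b C' L m n := by
  have hK : dprod C 1 (L + 1) = dprod C' 1 (L + 1) :=
    dprod_congr fun t h1 h2 => h t h1 (by omega)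
  have hE : dprod (fun j => b (j - 1) * C j) 1 (L + 1) =
      dprod (fun j => b (j - 1) * C' j) 1 (L + 1) :=
    dprod_congr fun t h1 h2 => by rw [h t h1 (by omega)]
  rw [rightFactor, rightFactor, hK, hE]

theorem norm_trace_eq_norm_trace_leftFactor_rightFactor {L m n : ℕ} (hLm : L ≤ m)
    (hmn : m ≤ n) {P a b C : ℕ → M2} {D : M2} (ha : ∀ j, a j ∈ pauliGroup)
    (hb : ∀ j, b j ∈ pauliGroup) (hab : ∀ j < n, P j = a j * b j) (ha_one : ∀ j < L, a j = 1)
    (hC : ∀ t, 1 ≤ t → t ≤ L → IsClifford (C t)) (hD : IsClifford D) :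
    ‖(dprod P m n * D * dprod P L m * dprod (fun j => P (j - 1) * C j) 1 (L + 1)).trace‖ =
      ‖(leftFactor a D L m n * D * rightFactor b C L m n * dprod C 1 (L + 1)).trace‖ := by
  have hK := isClifford_dprod hC
  have hA : phaseCon M2 (dprod P m n) (dprod b m n * dprod a m n) := by
    rw [dprod_congr fun j _ hj => hab j hj]
    exact (phaseCon M2).trans (dprod_mul_phaseCon ha hb m n)
      (phaseCon_mul_comm (dprod_mem fun j _ _ => ha j) (dprod_mem fun j _ _ => hb j))
  have hB : phaseCon M2 (dprod P L m) (dprod a L m * dprod b L m) := by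
    rw [dprod_congr fun j _ hj => hab j (by omega)]
    exact dprod_mul_phaseCon ha hb L m
  have hE : dprod (fun j => P (j - 1) * C j) 1 (L + 1) =
      dprod (fun j => b (j - 1) * C j) 1 (L + 1) :=
    dprod_congr fun j h1 h2 => by rw [hab _ (by omega), ha_one _ (by omega), one_mul]
  have hT := (phaseCon M2).mul ((phaseCon M2).mul ((phaseCon M2).mul hA ((phaseCon M2).refl D))
    hB) ((phaseCon M2).refl (dprod (fun j => b (j - 1) * C j) 1 (L + 1)))
  have hcancel : dprod a m n * D * (dprod a L m * dprod b L m) *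
      dprod (fun j => b (j - 1) * C j) 1 (L + 1) * dprod b m n =
      leftFactor a D L m n * D * rightFactor b C L m n * dprod C 1 (L + 1) := by
    simp only [leftFactor, rightFactor, mul_assoc, hD.conjTranspose_mul_cancel_left,
      hK.conjTranspose_mul_cancel_left, hK.conjTranspose_mul_self, mul_one]
  rw [hE, phaseCon.norm_trace_eq hT, ← hcancel]
  simp only [mul_assoc]
  rw [trace_mul_comm (dprod b m n)]
  simp only [mul_assoc]

def extendByOne {p : ℕ → Prop} [DecidablePred p] (Q : {j // p j} → {A : M2 // A ∈ PauliSet})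
    (j : ℕ) : M2 :=
  if h : p j then Q ⟨j, h⟩ else 1

theorem extendByOne_mem_pauliGroup {p : ℕ → Prop} [DecidablePred p]
    (Q : {j // p j} → {A : M2 // A ∈ PauliSet}) (j : ℕ) : extendByOne Q j ∈ pauliGroup := by
  unfold extendByOne
  split_ifs
  · exact pauliSet_subset_pauliGroup (Q _).2
  · exact one_mem _

theorem exists_pauliSet_phaseCon (A : M2) :
    ∃ R : {R : M2 // R ∈ PauliSet}, A ∈ pauliGroup → phaseCon M2 A R := by
  by_cases hA : A ∈ pauliGroup
  · obtain ⟨R, hR, hAR⟩ := hA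
    exact ⟨⟨R, hR⟩, fun _ => hAR⟩
  · exact ⟨⟨1, by simp [PauliSet]⟩, fun h => absurd h hA⟩

/-- Let `L ≤ m < n` and `J ⊆ {L, …, n−1}`. There exist functions
`f : (J → 𝒫) → M₂(ℂ) → 𝒫` and `g : ({0,…,n−1}∖J → 𝒫) → (Fin L → M₂(ℂ)) → 𝒫` such that
for all Paulis `P₀,…,P_{n−1} ∈ 𝒫` and all Clifford unitaries `C₁,…,C_L, D`,
`|tr((P_{n−1}⋯P_m)·D·(P_{m−1}⋯P_L)·(P_{L−1}C_L)⋯(P₀C₁))| = |tr(P·D·Q·C_L⋯C₁)|`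
with `P = f((P_j)_{j∈J}, D)` and `Q = g((P_j)_{j∉J}, (C₁,…,C_L))`. -/
theorem stmt3 (n L m : ℕ) (hLm : L ≤ m) (hmn : m < n)
    (J : Finset ℕ) (hJ : ∀ j ∈ J, L ≤ j ∧ j < n) :
    ∃ f : ({j // j ∈ J} → {A : M2 // A ∈ PauliSet}) → M2 → {A : M2 // A ∈ PauliSet},
    ∃ g : ({j // j < n ∧ j ∉ J} → {A : M2 // A ∈ PauliSet}) →
        (Fin L → M2) → {A : M2 // A ∈ PauliSet},
      ∀ (P : ℕ → M2) (hP : ∀ j, j < n → P j ∈ PauliSet)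
        (C : ℕ → M2) (_hC : ∀ t, 1 ≤ t → t ≤ L → IsClifford (C t))
        (D : M2) (_hD : IsClifford D),
        ‖((dprod P m n * D * dprod P L m *
            ((List.range L).map fun i => P (L - 1 - i) * C (L - i)).prod).trace)‖
          = ‖
            ((((f (fun j => ⟨P j.1, hP j.1 (hJ j.1 j.2).2⟩) D : {A : M2 // A ∈ PauliSet}) : M2)
              * D *
              ((g (fun j => ⟨P j.1, hP j.1 j.2.1⟩) (fun t => C ((t : ℕ) + 1)) :
                {A : M2 // A ∈ PauliSet}) : M2) *
              dprod C 1 (L + 1)).trace)‖ := by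
  choose rep hrep using exists_pauliSet_phaseCon
  refine ⟨fun PJ D => rep (leftFactor (extendByOne PJ) D L m n),
    fun PN Cv => rep (rightFactor (extendByOne PN)
      (fun t => if h : t - 1 < L then Cv ⟨t - 1, h⟩ else 1) L m n), ?_⟩
  intro P hP C hC D hD
  beta_reduce
  set a := extendByOne fun j : {j // j ∈ J} => ⟨P j, hP j (hJ j j.2).2⟩
  set b := extendByOne fun j : {j // j < n ∧ j ∉ J} => ⟨P j, hP j j.2.1⟩
  have hab : ∀ j < n, P j = a j * b j := by
    intro j hj
    by_cases hjJ : j ∈ J <;> simp [a, b, extendByOne, hj, hjJ]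
  have ha_one : ∀ j < L, a j = 1 := fun j hj =>
    dif_neg fun hjJ => absurd (hJ j hjJ).1 (by omega)
  have ha : ∀ j, a j ∈ pauliGroup := extendByOne_mem_pauliGroup _
  have hb : ∀ j, b j ∈ pauliGroup := extendByOne_mem_pauliGroup _
  rw [rightFactor_congr (C' := C) (fun t h1 h2 => by simp [show t - 1 < L by omega,
      Nat.sub_add_cancel h1]), prod_map_range_mul_eq_dprod,
    norm_trace_eq_norm_trace_leftFactor_rightFactor hLm hmn.le
      ha hb hab ha_one hC hD]
  have hX := hrep _ (leftFactor_mem_pauliGroup ha hD L m n)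
  have hY := hrep _ (rightFactor_mem_pauliGroup hb hC m n)
  exact phaseCon.norm_trace_eq ((phaseCon M2).mul ((phaseCon M2).mul ((phaseCon M2).mul hX
    ((phaseCon M2).refl D)) hY) ((phaseCon M2).refl _))
end
end

section
/- Let C be a 2×2 Clifford unitary and let v := (1 ⊗ C)·Φ ∈ ℂ⁴. Among the 15 pairs (P_A, P_B) ∈ 𝒫 × 𝒫 with (P_A, P_B) ≠ (1, 1), exactly 3 satisfy ⟨v, (P_A ⊗ P_B)·v⟩ ∈ {+1, −1}, and the remaining 12 satisfy ⟨v, (P_A ⊗ P_B)·v⟩ = 0. -/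
open Matrix Kronecker

noncomputable section

/-- The Bell state `Φ = (e₀⊗e₀ + e₁⊗e₁)/√2` as a vector on `ℂ² ⊗ ℂ² ≃ ℂ⁴`. -/
def BellPhi : Fin 2 × Fin 2 → ℂ := fun p => if p.1 = p.2 then ((Real.sqrt 2)⁻¹ : ℝ) else 0

/-- The expectation `⟨v, (A ⊗ B)·v⟩` of a two-qubit observable `A ⊗ B` in a state `v`. -/
def pairExp (v : Fin 2 × Fin 2 → ℂ) (A B : M2) : ℂ :=
  ∑ p : Fin 2 × Fin 2, star (v p) * ((A ⊗ₖ B).mulVec v) p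

/-! For the maximally entangled state, `⟨v, (A ⊗ B) v⟩ = tr (C Aᵀ Cᴴ B) / 2`. A Pauli satisfies
`Aᵀ = ±A`, and a Clifford `C` sends it to `α Q` with `Q` Pauli and `α = ±1` (real, since `C A Cᴴ`
is Hermitian). Since `tr (Q B) = 2 δ_QB` on Paulis, each row `A` of the 4 × 4 table of expectations
has exactly one entry `±1`, the others vanish, and the `(1, 1)` entry is `‖v‖² = 1`. Removing it
leaves `4 - 1 = 3` entries `±1` and `16 - 4 = 12` zeros. -/

theorem Set.ncard_setOf_ne_and_mem_of_unique_mem {α β : Type*} [Zero β] {S : Set α}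
    (hS : S.Finite) {U : Set β} (hU : (0 : β) ∉ U) {f : α → α → β} {a₀ : α} (ha₀ : a₀ ∈ S)
    (hf₀ : f a₀ a₀ ∈ U) (hrow : ∀ a ∈ S, ∃ b ∈ S, f a b ∈ U ∧ ∀ b' ∈ S, b' ≠ b → f a b' = 0) :
    {q : α × α | q.1 ∈ S ∧ q.2 ∈ S ∧ q ≠ (a₀, a₀) ∧ f q.1 q.2 ∈ U}.ncard = S.ncard - 1 ∧
    {q : α × α | q.1 ∈ S ∧ q.2 ∈ S ∧ q ≠ (a₀, a₀) ∧ f q.1 q.2 = 0}.ncard =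
      S.ncard * S.ncard - S.ncard := by
  choose! g hgS hgU hg0 using hrow
  have mem_U_iff : ∀ a ∈ S, ∀ b ∈ S, f a b ∈ U ↔ b = g a := fun a ha b hb =>
    ⟨fun h => by_contra fun hne => hU (hg0 a ha b hb hne ▸ h), fun h => h ▸ hgU a ha⟩
  have eq_zero_iff : ∀ a ∈ S, ∀ b ∈ S, f a b = 0 ↔ b ≠ g a := fun a ha b hb =>
    ⟨fun h hb' => hU (h ▸ hb' ▸ hgU a ha), hg0 a ha b hb⟩
  have hg₀ : g a₀ = a₀ := ((mem_U_iff a₀ ha₀ a₀ ha₀).1 hf₀).symm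
  set Γ := (fun a => (a, g a)) '' S
  have mem_Γ : ∀ q : α × α, q ∈ Γ ↔ q.1 ∈ S ∧ q.2 = g q.1 := by
    rintro ⟨a, b⟩
    constructor
    · rintro ⟨a, ha, h⟩
      obtain ⟨rfl, rfl⟩ := Prod.mk.inj h
      exact ⟨ha, rfl⟩
    · rintro ⟨ha, hb⟩
      exact ⟨a, ha, Prod.ext rfl hb.symm⟩
  have hΓ : Γ.ncard = S.ncard :=
    Set.ncard_image_of_injective S fun a b h => (Prod.ext_iff.1 h).1
  have hΓS : Γ ⊆ S ×ˢ S := fun q hq => by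
    obtain ⟨h1, h2⟩ := (mem_Γ q).1 hq
    exact ⟨h1, h2 ▸ hgS _ h1⟩
  constructor
  · have : {q : α × α | q.1 ∈ S ∧ q.2 ∈ S ∧ q ≠ (a₀, a₀) ∧ f q.1 q.2 ∈ U} = Γ \ {(a₀, a₀)} := by
      ext q
      simp only [Set.mem_ofPred_eq, Set.mem_sdiff, mem_Γ, Set.mem_singleton_iff]
      constructor
      · rintro ⟨h1, h2, hne, hfU⟩
        exact ⟨⟨h1, (mem_U_iff _ h1 _ h2).1 hfU⟩, hne⟩
      · rintro ⟨⟨h1, h2⟩, hne⟩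
        exact ⟨h1, h2 ▸ hgS _ h1, hne, (mem_U_iff _ h1 _ (h2 ▸ hgS _ h1)).2 h2⟩
    rw [this, Set.ncard_sdiff_singleton_of_mem ((mem_Γ (a₀, a₀)).2 ⟨ha₀, hg₀.symm⟩), hΓ]
  · have : {q : α × α | q.1 ∈ S ∧ q.2 ∈ S ∧ q ≠ (a₀, a₀) ∧ f q.1 q.2 = 0} = S ×ˢ S \ Γ := by
      ext q
      simp only [Set.mem_ofPred_eq, Set.mem_sdiff, mem_Γ, Set.mem_prod, not_and]
      constructor
      · rintro ⟨h1, h2, -, h0⟩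
        exact ⟨⟨h1, h2⟩, fun _ => (eq_zero_iff _ h1 _ h2).1 h0⟩
      · rintro ⟨⟨h1, h2⟩, hne⟩
        refine ⟨h1, h2, fun h => hne h1 (by rw [h, hg₀]), (eq_zero_iff _ h1 _ h2).2 (hne h1)⟩
    rw [this, Set.ncard_sdiff hΓS (hS.image _), Set.ncard_prod, hΓ]

theorem one_mem_pauliSet : (1 : M2) ∈ PauliSet := Or.inl rfl

theorem ncard_pauliSet : PauliSet.ncard = 4 := by
  rw [PauliSet, Set.ncard_insert_of_notMem, Set.ncard_insert_of_notMem, Set.ncard_pair]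
  all_goals
    norm_num [PX, PY, PZ, ← Matrix.ext_iff, Fin.forall_fin_two, Complex.ext_iff, Matrix.one_apply]

theorem conjTranspose_of_mem_pauliSet {P : M2} (hP : P ∈ PauliSet) : Pᴴ = P := by
  rcases hP with rfl | rfl | rfl | rfl
  · exact conjTranspose_one
  all_goals ext i j; fin_cases i <;> fin_cases j <;> simp [PX, PY, PZ]

theorem exists_transpose_eq_smul_of_mem_pauliSet {P : M2} (hP : P ∈ PauliSet) :
    ∃ t ∈ ({1, -1} : Set ℂ), Pᵀ = t • P := by
  rcases hP with rfl | rfl | rfl | rfl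
  · exact ⟨1, by simp⟩
  · exact ⟨1, by simp, by ext i j; fin_cases i <;> fin_cases j <;> simp [PX]⟩
  · exact ⟨-1, by simp, by ext i j; fin_cases i <;> fin_cases j <;> simp [PY]⟩
  · exact ⟨1, by simp, by ext i j; fin_cases i <;> fin_cases j <;> simp [PZ]⟩

theorem ne_zero_of_mem_pauliSet {P : M2} (hP : P ∈ PauliSet) : P ≠ 0 := by
  rcases hP with rfl | rfl | rfl | rfl
  · exact one_ne_zero
  all_goals simp [PX, PY, PZ, ← Matrix.ext_iff, Fin.forall_fin_two]

theorem mul_self_of_mem_pauliSet {P : M2} (hP : P ∈ PauliSet) : P * P = 1 := by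
  rcases hP with rfl | rfl | rfl | rfl
  · exact one_mul 1
  all_goals
    ext i j; fin_cases i <;> fin_cases j <;> simp [PX, PY, PZ, Matrix.mul_apply, Fin.sum_univ_two]

theorem trace_mul_of_mem_pauliSet_of_ne {P Q : M2} (hP : P ∈ PauliSet) (hQ : Q ∈ PauliSet)
    (hPQ : P ≠ Q) : (P * Q).trace = 0 := by
  rcases hP with rfl | rfl | rfl | rfl <;> rcases hQ with rfl | rfl | rfl | rfl <;>
    first
    | exact absurd rfl hPQ
    | simp [PX, PY, PZ, Matrix.trace_fin_two]

theorem pairExp_one_kronecker_mulVec_bellPhi (A B C : M2) :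
    pairExp (((1 : M2) ⊗ₖ C).mulVec BellPhi) A B = (C * Aᵀ * Cᴴ * B).trace / 2 := by
  have hr : ((Real.sqrt 2 : ℂ))⁻¹ * (Real.sqrt 2 : ℂ)⁻¹ = 1 / 2 := by
    rw [← mul_inv, ← Complex.ofReal_mul, Real.mul_self_sqrt zero_le_two]; norm_num
  rw [div_eq_inv_mul, ← one_div, ← hr]
  simp only [pairExp, BellPhi, Matrix.mulVec, dotProduct, Matrix.kroneckerMap_apply,
    Fintype.sum_prod_type, Fin.sum_univ_two, Matrix.trace_fin_two, Matrix.mul_apply,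
    Matrix.one_apply, Matrix.transpose_apply, Matrix.conjTranspose_apply, Fin.isValue,
    ↓reduceIte, zero_ne_one, one_ne_zero, Complex.ofReal_inv, RCLike.star_def,
    map_mul, map_inv₀, Complex.conj_ofReal, one_mul, zero_mul, mul_zero, add_zero, zero_add]
  ring

theorem pairExp_one_kronecker_mulVec_bellPhi_one_one {C : M2}
    (hC : C ∈ Matrix.unitaryGroup (Fin 2) ℂ) :
    pairExp (((1 : M2) ⊗ₖ C).mulVec BellPhi) 1 1 = 1 := by
  rw [pairExp_one_kronecker_mulVec_bellPhi, transpose_one, mul_one, mul_one,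
    ← star_eq_conjTranspose, mem_unitaryGroup_iff.1 hC, trace_one]
  norm_num

theorem Complex.eq_one_or_eq_neg_one_of_conj_eq_self {z : ℂ} (hz : star z = z) (h1 : ‖z‖ = 1) :
    z = 1 ∨ z = -1 := by
  obtain ⟨x, rfl⟩ := Complex.conj_eq_iff_real.1 hz
  rw [Complex.norm_real, Real.norm_eq_abs] at h1
  rcases abs_eq zero_le_one |>.1 h1 with rfl | rfl <;> simp

theorem IsClifford.exists_mul_transpose_mul_eq_smul {C P : M2} (hC : IsClifford C)
    (hP : P ∈ PauliSet) : ∃ Q ∈ PauliSet, ∃ s ∈ ({1, -1} : Set ℂ), C * Pᵀ * Cᴴ = s • Q := by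
  obtain ⟨Q, hQ, α, hα, hCP⟩ := hC.2 P hP
  have hα_real : star α = α := by
    have hself : (α • Q)ᴴ = α • Q := by
      rw [← hCP, conjTranspose_mul, conjTranspose_mul, conjTranspose_conjTranspose,
        conjTranspose_of_mem_pauliSet hP, Matrix.mul_assoc]
    rw [conjTranspose_smul, conjTranspose_of_mem_pauliSet hQ] at hself
    exact smul_left_injective ℂ (ne_zero_of_mem_pauliSet hQ) hself
  obtain ⟨t, ht, hPt⟩ := exists_transpose_eq_smul_of_mem_pauliSet hP
  refine ⟨Q, hQ, t * α, ?_, ?_⟩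
  · rcases ht with rfl | rfl <;>
      rcases Complex.eq_one_or_eq_neg_one_of_conj_eq_self hα_real hα with rfl | rfl <;> simp
  · rw [hPt, Matrix.mul_smul, Matrix.smul_mul, hCP, smul_smul]

theorem IsClifford.exists_pairExp_mem_and_eq_zero_of_ne {C A : M2} (hC : IsClifford C)
    (hA : A ∈ PauliSet) :
    ∃ B ∈ PauliSet, pairExp (((1 : M2) ⊗ₖ C).mulVec BellPhi) A B ∈ ({1, -1} : Set ℂ) ∧
      ∀ B' ∈ PauliSet, B' ≠ B → pairExp (((1 : M2) ⊗ₖ C).mulVec BellPhi) A B' = 0 := by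
  obtain ⟨Q, hQ, s, hs, hCA⟩ := hC.exists_mul_transpose_mul_eq_smul hA
  refine ⟨Q, hQ, ?_, fun B hB hBQ => ?_⟩
  · rw [pairExp_one_kronecker_mulVec_bellPhi, hCA, smul_mul, trace_smul,
      mul_self_of_mem_pauliSet hQ, trace_one]
    simpa using hs
  · rw [pairExp_one_kronecker_mulVec_bellPhi, hCA, smul_mul, trace_smul,
      trace_mul_of_mem_pauliSet_of_ne hQ hB hBQ.symm, smul_zero, zero_div]

/-- For a Clifford unitary `C` and `v := (1 ⊗ C)·Φ`, among the 15
non-identity Pauli pairs exactly 3 have expectation in `{±1}` in `v`, and the remaining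
12 have expectation `0` in `v`. -/
theorem stmt11 (C : M2) (hC : IsClifford C) :
    {q : M2 × M2 | q.1 ∈ PauliSet ∧ q.2 ∈ PauliSet ∧ q ≠ (1, 1) ∧
        pairExp (((1 : M2) ⊗ₖ C).mulVec BellPhi) q.1 q.2 ∈ ({1, -1} : Set ℂ)}.ncard = 3 ∧
    {q : M2 × M2 | q.1 ∈ PauliSet ∧ q.2 ∈ PauliSet ∧ q ≠ (1, 1) ∧
        pairExp (((1 : M2) ⊗ₖ C).mulVec BellPhi) q.1 q.2 = 0}.ncard = 12 := by
  have h := Set.ncard_setOf_ne_and_mem_of_unique_mem (U := {1, -1})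
    (f := pairExp (((1 : M2) ⊗ₖ C).mulVec BellPhi))
    (Set.finite_of_ncard_ne_zero (by simp [ncard_pauliSet])) (by norm_num) one_mem_pauliSet
    (by rw [pairExp_one_kronecker_mulVec_bellPhi_one_one hC.1]; exact Set.mem_insert 1 _)
    fun A hA => hC.exists_pairExp_mem_and_eq_zero_of_ne hA
  rwa [ncard_pauliSet] at h

end
end
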